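/- arXiv:2309.07018 — 9 statements merged into one kernel-verified Lean document; each statement's English description precedes it below -/
import Mathlib

section
/- Let G=(V,E) be a connected split graph with partition V = C ∪ I, where C induces a clique and I is an independent set. Then every unique response Roman dominating function f : V → {0,1,2} on G satisfies one of the following: (a) V_2(f) ∩ I = ∅ and |V_2(f) ∩ C| ≤ 1, or (b) V_2(f) ⊆ I. -/
/-- A perfect Roman dominating function: every vertex with value 0 has exactly one
neighbor with value 2. -/
def IsPRDF {V : Type*} (G : SimpleGraph V) (f : V → Fin 3) : Prop :=
  ∀ v, f v = 0 → ∃! u, G.Adj v u ∧ f u = 2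

/-- A unique response Roman dominating function: a pRdf such that in addition
every vertex with value at least 1 has no neighbor with value 2. -/
def IsURRDF {V : Type*} (G : SimpleGraph V) (f : V → Fin 3) : Prop :=
  IsPRDF G f ∧ ∀ v u, 1 ≤ f v → G.Adj v u → f u ≠ 2

lemma one_le_of_ne_zero' (x : Fin 3) (h : x ≠ 0) : 1 ≤ x := by
  fin_cases x <;> simp_all

theorem stmt1 {V : Type*} [Fintype V] [DecidableEq V] (G : SimpleGraph V)
    [DecidableRel G.Adj] (C I : Finset V)
    (hdisj : Disjoint C I) (hunion : C ∪ I = Finset.univ)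
    (hclique : G.IsClique (C : Set V))
    (hindep : ∀ u ∈ I, ∀ v ∈ I, ¬ G.Adj u v)
    (hconn : G.Connected)
    (f : V → Fin 3) (hf : IsURRDF G f) :
    ((∀ v ∈ I, f v ≠ 2) ∧ (C.filter (fun v => f v = 2)).card ≤ 1) ∨
    (∀ v, f v = 2 → v ∈ I) := by
  by_cases hI : ∀ v ∈ I, f v ≠ 2
  · left
    refine ⟨hI, Finset.card_le_one.2 ?_⟩
    intro a ha b hb
    simp only [Finset.mem_filter] at ha hb
    by_contra hne
    exact hf.2 a b (by rw [ha.2]; decide)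
      (hclique ha.1 hb.1 hne) hb.2
  · right
    push_neg at hI
    obtain ⟨w, hwI, hw2⟩ := hI
    intro c hc2
    by_contra hcI
    -- c ∈ C
    have hcC : c ∈ C := by
      have := Finset.mem_univ c
      rw [← hunion, Finset.mem_union] at this
      tauto
    have hwc : w ≠ c := fun h => hcI (h ▸ hwI)
    -- w is not adjacent to c
    have hnadj : ¬ G.Adj w c := fun h =>
      hf.2 w c (by rw [hw2]; decide) h hc2
    -- get a neighbor of w from connectivity
    obtain ⟨p⟩ := hconn w c
    cases p with
    | nil => exact hwc rfl
    | @cons _ b _ h q =>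
      -- h : G.Adj w b
      have hbC : b ∈ C := by
        have hb := Finset.mem_univ b
        rw [← hunion, Finset.mem_union] at hb
        rcases hb with hb | hb
        · exact hb
        · exact absurd h (hindep w hwI b hb)
      have hbc : b ≠ c := fun e => hnadj (e ▸ h)
      by_cases hb0 : f b = 0
      · obtain ⟨u, _, huniq⟩ := hf.1 b hb0
        have hw : w = u := huniq w ⟨h.symm, hw2⟩
        have hcu : c = u := huniq c ⟨hclique hbC hcC hbc, hc2⟩
        exact hwc (hw.trans hcu.symm)
      · exact hf.2 b c (one_le_of_ne_zero' _ hb0) (hclique hbC hcC hbc) hc2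
end

section
/- Let G=(V,E) be a finite simple graph. For S ⊆ V define ψ_G(S) : V → {0,1,2} by ψ_G(S)(x) = 2 if x ∈ S, ψ_G(S)(x) = 0 if x ∈ N(S) \ S, and ψ_G(S)(x) = 1 otherwise. Then ψ_G restricts to a bijection between the set of 2-packings of G and the set of unique response Roman dominating functions on G; in particular, for every urRdf f the set V_2(f) is a 2-packing of G and f = ψ_G(V_2(f)). -/
/-- A 2-packing: any two distinct vertices of `S` have disjoint closed neighborhoods. -/
def Is2Packing {V : Type*} (G : SimpleGraph V) (S : Finset V) : Prop :=
  ∀ u ∈ S, ∀ v ∈ S, u ≠ v →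
    Disjoint (insert u (G.neighborSet u)) (insert v (G.neighborSet v))

/-- The function `ψ_G(S)`: 2 on `S`, 0 on `N(S) \ S`, and 1 elsewhere. -/
def psi {V : Type*} [Fintype V] [DecidableEq V] (G : SimpleGraph V) [DecidableRel G.Adj]
    (S : Finset V) : V → Fin 3 :=
  fun x => if x ∈ S then 2
    else if x ∈ S.biUnion (fun s => G.neighborFinset s) then 0
    else 1

section aux
variable {V : Type*} [Fintype V] [DecidableEq V] (G : SimpleGraph V) [DecidableRel G.Adj]

lemma fin3_cases : ∀ a : Fin 3, a = 0 ∨ a = 1 ∨ a = 2 := by decide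

lemma psi_two_iff (S : Finset V) (x : V) : psi G S x = 2 ↔ x ∈ S := by
  unfold psi
  split_ifs with h1 h2
  · simp [h1]
  · simp only [h1, iff_false]
    decide
  · simp only [h1, iff_false]
    decide

lemma mem_biUnion_iff (S : Finset V) (x : V) :
    x ∈ S.biUnion (fun s => G.neighborFinset s) ↔ ∃ s ∈ S, G.Adj s x := by
  simp [SimpleGraph.mem_neighborFinset]

lemma psi_urrdf (S : Finset V) (hS : Is2Packing G S) : IsURRDF G (psi G S) := by
  have h2 := psi_two_iff G S
  constructor
  · intro v hv
    by_cases h1 : v ∈ S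
    · rw [(h2 v).2 h1] at hv; exact absurd hv (by decide)
    · by_cases hb : v ∈ S.biUnion (fun s => G.neighborFinset s)
      · rw [mem_biUnion_iff] at hb
        obtain ⟨s, hsS, hadj⟩ := hb
        refine ⟨s, ⟨hadj.symm, (h2 s).2 hsS⟩, ?_⟩
        rintro u ⟨hu, hu2⟩
        rw [h2] at hu2
        by_contra hne
        exact Set.disjoint_left.mp (hS u hu2 s hsS hne)
          (Set.mem_insert_iff.2 (Or.inr hu.symm)) (Set.mem_insert_iff.2 (Or.inr hadj))
      · have : psi G S v = 1 := by simp [psi, h1, hb]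
        rw [this] at hv; exact absurd hv (by decide)
  · intro v u hv hadj hu2
    rw [h2] at hu2
    by_cases h1 : v ∈ S
    · rcases eq_or_ne v u with rfl | hne
      · exact G.irrefl hadj
      · exact Set.disjoint_left.mp (hS v h1 u hu2 hne)
          (Set.mem_insert _ _) (Set.mem_insert_iff.2 (Or.inr hadj.symm))
    · have hb : v ∈ S.biUnion (fun s => G.neighborFinset s) :=
        (mem_biUnion_iff G S v).2 ⟨u, hu2, hadj.symm⟩
      have h0 : psi G S v = 0 := by simp [psi, h1, hb]
      rw [h0] at hv; exact absurd hv (by decide)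

lemma urrdf_packing (f : V → Fin 3) (hf : IsURRDF G f) :
    Is2Packing G (Finset.univ.filter (fun v => f v = 2)) := by
  intro u hu v hv hne
  simp only [Finset.mem_filter, Finset.mem_univ, true_and] at hu hv
  rw [Set.disjoint_left]
  rintro x hxu hxv
  rcases Set.mem_insert_iff.1 hxu with rfl | hau
  · rcases Set.mem_insert_iff.1 hxv with rfl | hav
    · exact hne rfl
    · exact hf.2 v x (by rw [hv]; decide) hav hu
  · rcases Set.mem_insert_iff.1 hxv with rfl | hav
    · exact hf.2 u x (by rw [hu]; decide) hau hv
    · -- hau : G.Adj u x, hav : G.Adj v x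
      rcases fin3_cases (f x) with h0 | h1 | h2'
      · obtain ⟨w, _, huniq⟩ := hf.1 x h0
        exact hne ((huniq u ⟨hau.symm, hu⟩).trans (huniq v ⟨hav.symm, hv⟩).symm)
      · exact hf.2 x u (by rw [h1]) hau.symm hu
      · exact hf.2 x u (by rw [h2']; decide) hau.symm hu

lemma psi_filter (f : V → Fin 3) (hf : IsURRDF G f) :
    psi G (Finset.univ.filter (fun v => f v = 2)) = f := by
  set S := Finset.univ.filter (fun v => f v = 2) with hSdef
  have hmem : ∀ x, x ∈ S ↔ f x = 2 := by
    intro x; simp [hSdef]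
  funext x
  rcases fin3_cases (f x) with h0 | h1 | h2'
  · have hxS : x ∉ S := by rw [hmem, h0]; decide
    obtain ⟨u, ⟨hadj, hu2⟩, _⟩ := hf.1 x h0
    have hb : x ∈ S.biUnion (fun s => G.neighborFinset s) :=
      (mem_biUnion_iff G S x).2 ⟨u, (hmem u).2 hu2, hadj.symm⟩
    simp [psi, hxS, hb, h0]
  · have hxS : x ∉ S := by rw [hmem, h1]; decide
    have hb : x ∉ S.biUnion (fun s => G.neighborFinset s) := by
      rw [mem_biUnion_iff]
      rintro ⟨s, hsS, hadj⟩
      exact hf.2 x s (by rw [h1]) hadj.symm ((hmem s).1 hsS)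
    simp [psi, hxS, hb, h1]
  · have hxS : x ∈ S := (hmem x).2 h2'
    simp [psi, hxS, h2']

end aux

theorem stmt3 {V : Type*} [Fintype V] [DecidableEq V] (G : SimpleGraph V)
    [DecidableRel G.Adj] :
    Set.BijOn (psi G) {S : Finset V | Is2Packing G S} {f : V → Fin 3 | IsURRDF G f} ∧
    ∀ f : V → Fin 3, IsURRDF G f →
      Is2Packing G (Finset.univ.filter (fun v => f v = 2)) ∧
      psi G (Finset.univ.filter (fun v => f v = 2)) = f := by
  refine ⟨⟨?_, ?_, ?_⟩, fun f hf => ⟨urrdf_packing G f hf, psi_filter G f hf⟩⟩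
  · intro S hS
    exact psi_urrdf G S hS
  · intro S _ S' _ heq
    ext x
    rw [← psi_two_iff G S x, heq, psi_two_iff]
  · intro f hf
    exact ⟨Finset.univ.filter (fun v => f v = 2), urrdf_packing G f hf, psi_filter G f hf⟩
end

section
/- For every t ≥ 1, the graph consisting of t pairwise disjoint edges (a perfect matching on n = 2t vertices, which has no isolated vertices) has exactly 3^t = (√3)^n unique response Roman dominating functions. In particular, on a single edge {u,v} the urRdfs are exactly 2·χ_{{v}}, 2·χ_{{u}}, and χ_{{u,v}}. -/
/-- The graph consisting of `t` pairwise disjoint edges: a perfect matching on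
`2t` vertices, where `(i, b)` is adjacent exactly to `(i, ¬b)`. -/
def matchGraph (t : ℕ) : SimpleGraph (Fin t × Bool) :=
  SimpleGraph.fromRel (fun x y => x.1 = y.1)

def Good (a b : Fin 3) : Prop :=
  (a = 0 ∧ b = 2) ∨ (a = 2 ∧ b = 0) ∨ (a = 1 ∧ b = 1)

instance (a b : Fin 3) : Decidable (Good a b) := by
  unfold Good; infer_instance

lemma good_intro : ∀ a b : Fin 3, (a = 0 → b = 2) → (b = 0 → a = 2) →
    (1 ≤ a → b ≠ 2) → (1 ≤ b → a ≠ 2) → Good a b := by decide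

lemma good_elim : ∀ a b : Fin 3, Good a b →
    (a = 0 → b = 2) ∧ (b = 0 → a = 2) ∧ (1 ≤ a → b ≠ 2) ∧ (1 ≤ b → a ≠ 2) := by decide

lemma matchGraph_adj {t : ℕ} {x y : Fin t × Bool} :
    (matchGraph t).Adj x y ↔ y = (x.1, !x.2) := by
  obtain ⟨i, b⟩ := x; obtain ⟨j, c⟩ := y
  simp only [matchGraph, SimpleGraph.fromRel_adj, Prod.mk.injEq, ne_eq]
  constructor
  · rintro ⟨hne, h | h⟩ <;> simp_all <;> cases b <;> cases c <;> simp_all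
  · rintro ⟨rfl, rfl⟩
    cases b <;> simp

lemma urrdf_iff {t : ℕ} (f : Fin t × Bool → Fin 3) :
    IsURRDF (matchGraph t) f ↔ ∀ i, Good (f (i, false)) (f (i, true)) := by
  constructor
  · rintro ⟨h1, h2⟩ i
    refine good_intro _ _ ?_ ?_ ?_ ?_
    · intro h0
      obtain ⟨u, ⟨hu, hu2⟩, _⟩ := h1 (i, false) h0
      rw [matchGraph_adj] at hu; subst hu; simpa using hu2
    · intro h0
      obtain ⟨u, ⟨hu, hu2⟩, _⟩ := h1 (i, true) h0
      rw [matchGraph_adj] at hu; subst hu; simpa using hu2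
    · exact fun h => h2 (i, false) (i, true) h (matchGraph_adj.mpr rfl)
    · exact fun h => h2 (i, true) (i, false) h (matchGraph_adj.mpr rfl)
  · intro h
    constructor
    · intro v hv
      refine ⟨(v.1, !v.2), ⟨matchGraph_adj.mpr rfl, ?_⟩, ?_⟩
      · have hg := good_elim _ _ (h v.1)
        obtain ⟨i, b⟩ := v
        cases b
        · exact hg.1 hv
        · exact hg.2.1 hv
      · intro u hu
        rw [matchGraph_adj] at hu
        exact hu.1
    · intro v u hv hadj
      rw [matchGraph_adj] at hadj
      subst hadj
      have hg := good_elim _ _ (h v.1)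
      obtain ⟨i, b⟩ := v
      cases b
      · exact hg.2.2.1 hv
      · exact hg.2.2.2 hv

theorem stmt5 (t : ℕ) (ht : 1 ≤ t) :
    -- it is a perfect matching on n = 2t vertices
    Fintype.card (Fin t × Bool) = 2 * t ∧
    -- it has no isolated vertices
    (∀ x : Fin t × Bool, ∃ y, (matchGraph t).Adj x y) ∧
    -- it has exactly 3^t unique response Roman dominating functions
    Set.ncard {f : Fin t × Bool → Fin 3 | IsURRDF (matchGraph t) f} = 3 ^ t ∧
    -- in particular, on a single edge {u,v} the urRdfs are exactly
    -- 2·χ_{{v}}, 2·χ_{{u}} and χ_{{u,v}}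
    {f : Bool → Fin 3 | IsURRDF (⊤ : SimpleGraph Bool) f} =
      {(fun x => if x = true then 2 else 0), (fun x => if x = false then 2 else 0),
        (fun _ => 1)} := by
  refine ⟨by simp [Fintype.card_prod, mul_comm], ?_, ?_, ?_⟩
  · intro x
    exact ⟨(x.1, !x.2), matchGraph_adj.mpr rfl⟩
  · have hset : {f : Fin t × Bool → Fin 3 | IsURRDF (matchGraph t) f} =
        {f | ∀ i, Good (f (i, false)) (f (i, true))} := by
      ext f; exact urrdf_iff f
    rw [hset, ← Nat.card_coe_set_eq]
    have e : {f : Fin t × Bool → Fin 3 // ∀ i, Good (f (i, false)) (f (i, true))} ≃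
        (Fin t → {p : Fin 3 × Fin 3 // Good p.1 p.2}) :=
      { toFun := fun f i => ⟨(f.1 (i, false), f.1 (i, true)), f.2 i⟩
        invFun := fun g => ⟨fun x => cond x.2 ((g x.1).1.2) ((g x.1).1.1),
          fun i => (g i).2⟩
        left_inv := fun f => by
          apply Subtype.ext; funext ⟨i, b⟩; cases b <;> rfl
        right_inv := fun g => by
          funext i; apply Subtype.ext; rfl }
    have h1 : Nat.card ↑{f : Fin t × Bool → Fin 3 | ∀ i, Good (f (i, false)) (f (i, true))}
        = Nat.card (Fin t → {p : Fin 3 × Fin 3 // Good p.1 p.2}) := Nat.card_congr e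
    have h3 : Nat.card {p : Fin 3 × Fin 3 // Good p.1 p.2} = 3 := by
      rw [Nat.card_eq_fintype_card]; decide
    rw [h1, Nat.card_fun, h3, Nat.card_eq_fintype_card, Fintype.card_fin]
  · ext f
    simp only [Set.mem_setOf_eq, Set.mem_insert_iff, Set.mem_singleton_iff,
      IsURRDF, IsPRDF, SimpleGraph.top_adj, ExistsUnique]
    revert f; decide
end

section
/- For every t ≥ 1, let G_t = (V,E) be the split graph with V = C ∪ I, C = {c_1,…,c_t} inducing a clique, I = {v_1,…,v_{2t}} an independent set, and E consisting of all edges inside C together with the edges {c_i, v_{2i-1}} and {c_i, v_{2i}} for each i ∈ {1,…,t}. Then G_t is a connected split graph of order 3t and has exactly t + 3^t unique response Roman dominating functions. -/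
/-- The split graph `G_t`: a clique `C = {c_0, …, c_{t-1}}` (the `Sum.inl` vertices),
an independent set `I = {v_0, …, v_{2t-1}}` (the `Sum.inr` vertices), and the
edges `{c_i, v_{2i}}` and `{c_i, v_{2i+1}}` for each `i`. -/
def splitGt (t : ℕ) : SimpleGraph (Fin t ⊕ Fin (2 * t)) :=
  SimpleGraph.fromRel (fun x y =>
    match x, y with
    | Sum.inl _, Sum.inl _ => True
    | Sum.inl i, Sum.inr j => (j : ℕ) / 2 = (i : ℕ)
    | _, _ => False)

namespace SplitGtAux

variable {t : ℕ}

lemma adj_ll (i j : Fin t) : (splitGt t).Adj (Sum.inl i) (Sum.inl j) ↔ i ≠ j := by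
  rw [splitGt, SimpleGraph.fromRel_adj]
  constructor
  · rintro ⟨h, -⟩ h'; exact h (by rw [h'])
  · intro h; exact ⟨by simpa using h, Or.inl trivial⟩

lemma adj_lr (i : Fin t) (j : Fin (2 * t)) :
    (splitGt t).Adj (Sum.inl i) (Sum.inr j) ↔ (j : ℕ) / 2 = (i : ℕ) := by
  rw [splitGt, SimpleGraph.fromRel_adj]
  constructor
  · rintro ⟨-, h | h⟩
    · exact h
    · exact h.elim
  · intro h; exact ⟨by simp, Or.inl h⟩

lemma adj_rl (i : Fin t) (j : Fin (2 * t)) :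
    (splitGt t).Adj (Sum.inr j) (Sum.inl i) ↔ (j : ℕ) / 2 = (i : ℕ) := by
  rw [(splitGt t).adj_comm]; exact adj_lr i j

lemma adj_rr (a b : Fin (2 * t)) : ¬ (splitGt t).Adj (Sum.inr a) (Sum.inr b) := by
  rw [splitGt, SimpleGraph.fromRel_adj]
  rintro ⟨-, h | h⟩ <;> exact h

lemma fin3_cases (x : Fin 3) : x = 0 ∨ x = 1 ∨ x = 2 := by revert x; decide

lemma one_le_iff (x : Fin 3) : 1 ≤ x ↔ x ≠ 0 := by revert x; decide

/-- the urRdf with `f c_i = 2`. -/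
def F1 (t : ℕ) (i : Fin t) : Fin t ⊕ Fin (2 * t) → Fin 3
  | .inl j => if j = i then 2 else 0
  | .inr j => if (j : ℕ) / 2 = (i : ℕ) then 0 else 1

/-- the urRdfs with no 2 on the clique, indexed by `g : Fin t → Fin 3`. -/
def F2 (t : ℕ) (g : Fin t → Fin 3) : Fin t ⊕ Fin (2 * t) → Fin 3
  | .inl j => if g j = 0 then 1 else 0
  | .inr j =>
      if h : (j : ℕ) / 2 < t then
        if g ⟨(j : ℕ) / 2, h⟩ = 0 then 1
        else if g ⟨(j : ℕ) / 2, h⟩ = 1 then (if (j : ℕ) % 2 = 0 then 2 else 1)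
        else (if (j : ℕ) % 2 = 0 then 1 else 2)
      else 1

lemma half_lt (j : Fin (2 * t)) : (j : ℕ) / 2 < t := by
  have := j.isLt; omega

lemma F1_isURRDF (i : Fin t) : IsURRDF (splitGt t) (F1 t i) := by
  constructor
  · intro v hv
    match v with
    | .inl j =>
      have hji : j ≠ i := by
        intro h; rw [F1, if_pos h] at hv; exact absurd hv (by decide)
      refine ⟨Sum.inl i, ⟨(adj_ll j i).2 hji, by simp [F1]⟩, ?_⟩
      rintro u ⟨hadj, hu2⟩
      match u with
      | .inl k =>
        by_cases hk : k = i
        · rw [hk]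
        · rw [F1, if_neg hk] at hu2; exact absurd hu2 (by decide)
      | .inr k =>
        exfalso
        rw [F1] at hu2
        split at hu2 <;> exact absurd hu2 (by decide)
    | .inr j =>
      have hji : (j : ℕ) / 2 = (i : ℕ) := by
        by_contra h; rw [F1, if_neg h] at hv; exact absurd hv (by decide)
      refine ⟨Sum.inl i, ⟨(adj_rl i j).2 hji, by simp [F1]⟩, ?_⟩
      rintro u ⟨hadj, hu2⟩
      match u with
      | .inl k =>
        have : (j : ℕ) / 2 = (k : ℕ) := (adj_rl k j).1 hadj
        exact congrArg Sum.inl (Fin.ext (by omega))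
      | .inr k => exact absurd hadj (adj_rr j k)
  · intro v u hv hadj hu2
    -- F1 t i u = 2 forces u = inl i
    have hu : u = Sum.inl i := by
      match u with
      | .inl k =>
        by_cases hk : k = i
        · rw [hk]
        · rw [F1, if_neg hk] at hu2; exact absurd hu2 (by decide)
      | .inr k =>
        exfalso; rw [F1] at hu2; split at hu2 <;> exact absurd hu2 (by decide)
    subst hu
    match v with
    | .inl j =>
      have hji : j ≠ i := (adj_ll j i).1 hadj
      rw [F1, if_neg hji] at hv
      exact absurd hv (by decide)
    | .inr j =>
      have hji : (j : ℕ) / 2 = (i : ℕ) := (adj_rl i j).1 hadj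
      rw [F1, if_pos hji] at hv
      exact absurd hv (by decide)

lemma F2_inr (g : Fin t → Fin 3) (j : Fin (2 * t)) :
    F2 t g (Sum.inr j) =
      if g ⟨(j : ℕ) / 2, half_lt j⟩ = 0 then 1
      else if g ⟨(j : ℕ) / 2, half_lt j⟩ = 1 then (if (j : ℕ) % 2 = 0 then 2 else 1)
      else (if (j : ℕ) % 2 = 0 then 1 else 2) := by
  rw [F2, dif_pos (half_lt j)]

lemma F2_inr_ne_zero (g : Fin t → Fin 3) (j : Fin (2 * t)) : F2 t g (Sum.inr j) ≠ 0 := by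
  rw [F2_inr]
  split
  · decide
  · split
    · split <;> decide
    · split <;> decide

-- the two leaves of clique vertex i
def leafA (t : ℕ) (ht : 1 ≤ t) (i : Fin t) : Fin (2 * t) := ⟨2 * i, by have := i.isLt; omega⟩
def leafB (t : ℕ) (ht : 1 ≤ t) (i : Fin t) : Fin (2 * t) := ⟨2 * i + 1, by have := i.isLt; omega⟩

lemma F2_isURRDF (g : Fin t → Fin 3) (ht : 1 ≤ t) : IsURRDF (splitGt t) (F2 t g) := by
  have key2 : ∀ (j : Fin (2 * t)), F2 t g (Sum.inr j) = 2 →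
      g ⟨(j : ℕ) / 2, half_lt j⟩ ≠ 0 ∧
      ((j : ℕ) % 2 = 0 ↔ g ⟨(j : ℕ) / 2, half_lt j⟩ = 1) := by
    intro j hj
    rw [F2_inr] at hj
    split at hj
    · exact absurd hj (by decide)
    · rename_i h0
      refine ⟨h0, ?_⟩
      split at hj
      · rename_i h1
        split at hj
        · simpa [h1] using ‹(j:ℕ) % 2 = 0›
        · exact absurd hj (by decide)
      · rename_i h1
        split at hj
        · exact absurd hj (by decide)
        · constructor
          · intro h; omega
          · intro h; exact absurd h h1
  constructor
  · intro v hv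
    match v with
    | .inl j =>
      have hgj : g j ≠ 0 := by
        intro h; rw [F2, if_pos h] at hv; exact absurd hv (by decide)
      -- witness: leafA if g j = 1, leafB if g j = 2
      set w : Fin t ⊕ Fin (2 * t) :=
        if g j = 1 then Sum.inr (leafA t ht j) else Sum.inr (leafB t ht j) with hw
      have hAj : ((leafA t ht j : Fin (2*t)) : ℕ) / 2 = (j : ℕ) := by simp only [leafA]; omega
      have hBj : ((leafB t ht j : Fin (2*t)) : ℕ) / 2 = (j : ℕ) := by simp only [leafB]; omega
      have hAmod : ((leafA t ht j : Fin (2*t)) : ℕ) % 2 = 0 := by simp only [leafA]; omega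
      have hBmod : ((leafB t ht j : Fin (2*t)) : ℕ) % 2 = 1 := by simp only [leafB]; omega
      have hw2 : F2 t g w = 2 := by
        rcases fin3_cases (g j) with h | h | h
        · exact absurd h hgj
        · rw [hw, if_pos h, F2_inr]
          have : (⟨((leafA t ht j : Fin (2*t)) : ℕ) / 2, half_lt _⟩ : Fin t) = j :=
            Fin.ext hAj
          rw [this, if_neg hgj, if_pos h, if_pos hAmod]
        · rw [hw, if_neg (by rw [h]; decide), F2_inr]
          have : (⟨((leafB t ht j : Fin (2*t)) : ℕ) / 2, half_lt _⟩ : Fin t) = j :=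
            Fin.ext hBj
          rw [this, if_neg hgj, if_neg (by rw [h]; decide), if_neg (by omega)]
      have hwadj : (splitGt t).Adj (Sum.inl j) w := by
        rcases fin3_cases (g j) with h | h | h
        · exact absurd h hgj
        · rw [hw, if_pos h]; exact (adj_lr j _).2 hAj
        · rw [hw, if_neg (by rw [h]; decide)]; exact (adj_lr j _).2 hBj
      refine ⟨w, ⟨hwadj, hw2⟩, ?_⟩
      rintro u ⟨hadj, hu2⟩
      match u with
      | .inl k =>
        exfalso; rw [F2] at hu2; split at hu2 <;> exact absurd hu2 (by decide)
      | .inr k =>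
        have hkj : (k : ℕ) / 2 = (j : ℕ) := (adj_lr j k).1 hadj
        obtain ⟨-, hiff⟩ := key2 k hu2
        have hkj' : (⟨(k : ℕ) / 2, half_lt k⟩ : Fin t) = j := Fin.ext hkj
        rw [hkj'] at hiff
        rcases fin3_cases (g j) with h | h | h
        · exact absurd h hgj
        · have : (k : ℕ) % 2 = 0 := hiff.2 h
          rw [hw, if_pos h]
          congr 1
          exact Fin.ext (by simp only [leafA]; omega)
        · have : (k : ℕ) % 2 ≠ 0 := fun hm => absurd (hiff.1 hm) (by rw [h]; decide)
          rw [hw, if_neg (by rw [h]; decide)]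
          congr 1
          exact Fin.ext (by simp only [leafB]; omega)
    | .inr j => exact absurd hv (F2_inr_ne_zero g j)
  · intro v u hv hadj hu2
    match u with
    | .inl k =>
      rw [F2] at hu2; split at hu2 <;> exact absurd hu2 (by decide)
    | .inr k =>
      obtain ⟨hk0, -⟩ := key2 k hu2
      -- v is adjacent to inr k, so v = inl (k/2)
      match v with
      | .inl m =>
        have hkm : (k : ℕ) / 2 = (m : ℕ) := (adj_lr m k).1 hadj
        have : (⟨(k : ℕ) / 2, half_lt k⟩ : Fin t) = m := Fin.ext hkm
        rw [this] at hk0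
        rw [F2, if_neg hk0] at hv
        exact absurd hv (by decide)
      | .inr m => exact absurd hadj (adj_rr m k)



lemma mem_ranges (ht : 1 ≤ t) (f : Fin t ⊕ Fin (2 * t) → Fin 3)
    (hf : IsURRDF (splitGt t) f) :
    f ∈ Set.range (F1 t) ∪ Set.range (F2 t) := by
  by_cases h2 : ∃ i, f (Sum.inl i) = 2
  · obtain ⟨i, hi⟩ := h2
    left
    refine ⟨i, ?_⟩
    have hzero : ∀ v, (splitGt t).Adj v (Sum.inl i) → f v = 0 := by
      intro v hadj
      by_contra h
      exact hf.2 v (Sum.inl i) ((one_le_iff _).2 h) hadj hi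
    funext x
    match x with
    | .inl j =>
      by_cases hj : j = i
      · subst hj; rw [F1, if_pos rfl, hi]
      · rw [F1, if_neg hj, (hzero _ ((adj_ll j i).2 hj)).symm]
    | .inr k =>
      by_cases hk : (k : ℕ) / 2 = (i : ℕ)
      · rw [F1, if_pos hk, (hzero _ ((adj_rl i k).2 hk)).symm]
      · rw [F1, if_neg hk]
        set m : Fin t := ⟨(k : ℕ) / 2, half_lt k⟩ with hm
        have hmval : (m : ℕ) = (k : ℕ) / 2 := rfl
        have hmi : m ≠ i := by
          intro h; apply hk; rw [hm] at h; exact congrArg Fin.val h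
        have hfm : f (Sum.inl m) = 0 := hzero _ ((adj_ll m i).2 hmi)
        have hne2 : f (Sum.inr k) ≠ 2 := by
          intro h
          obtain ⟨u, -, huniq⟩ := hf.1 _ hfm
          have e1 : Sum.inr k = u :=
            huniq _ ⟨(adj_lr m k).2 rfl, h⟩
          have e2 : Sum.inl i = u :=
            huniq _ ⟨(adj_ll m i).2 hmi, hi⟩
          rw [← e1] at e2; exact absurd e2 (by simp)
        have hne0 : f (Sum.inr k) ≠ 0 := by
          intro h
          obtain ⟨u, ⟨hadj, hu2⟩, -⟩ := hf.1 _ h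
          match u with
          | .inl n =>
            have hn : (k : ℕ) / 2 = (n : ℕ) := (adj_rl n k).1 hadj
            have : n = m := Fin.ext (by omega)

            rw [this, hfm] at hu2
            exact absurd hu2 (by decide)
          | .inr n => exact adj_rr k n hadj
        rcases fin3_cases (f (Sum.inr k)) with h | h | h
        · exact absurd h hne0
        · exact h.symm
        · exact absurd h hne2
  · push_neg at h2
    right
    have hleaf_ne0 : ∀ k : Fin (2 * t), f (Sum.inr k) ≠ 0 := by
      intro k hk
      obtain ⟨u, ⟨hadj, hu2⟩, -⟩ := hf.1 _ hk
      match u with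
      | .inl m => exact h2 m hu2
      | .inr m => exact adj_rr k m hadj
    have hmain : ∀ i : Fin t,
        (f (Sum.inl i) = 1 ∧ f (Sum.inr (leafA t ht i)) = 1 ∧ f (Sum.inr (leafB t ht i)) = 1)
        ∨ (f (Sum.inl i) = 0 ∧ f (Sum.inr (leafA t ht i)) = 2 ∧ f (Sum.inr (leafB t ht i)) = 1)
        ∨ (f (Sum.inl i) = 0 ∧ f (Sum.inr (leafA t ht i)) = 1 ∧ f (Sum.inr (leafB t ht i)) = 2) := by
      intro i
      have hAj : ((leafA t ht i : Fin (2*t)) : ℕ) / 2 = (i : ℕ) := by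
        simp only [leafA]; omega
      have hBj : ((leafB t ht i : Fin (2*t)) : ℕ) / 2 = (i : ℕ) := by
        simp only [leafB]; omega
      have hadjA : (splitGt t).Adj (Sum.inl i) (Sum.inr (leafA t ht i)) := (adj_lr i _).2 hAj
      have hadjB : (splitGt t).Adj (Sum.inl i) (Sum.inr (leafB t ht i)) := (adj_lr i _).2 hBj
      rcases fin3_cases (f (Sum.inl i)) with h | h | h
      · -- f c_i = 0 : exactly one leaf has value 2
        obtain ⟨u, ⟨hadj, hu2⟩, huniq⟩ := hf.1 _ h
        match u, hadj, hu2, huniq with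
        | .inl m, hadj, hu2, huniq => exact absurd hu2 (h2 m)
        | .inr k, hadj, hu2, huniq =>
          have hki : (k : ℕ) / 2 = (i : ℕ) := (adj_lr i k).1 hadj
          have hkAB : k = leafA t ht i ∨ k = leafB t ht i := by
            rcases Nat.mod_two_eq_zero_or_one (k : ℕ) with hm | hm
            · left; exact Fin.ext (by simp only [leafA]; omega)
            · right; exact Fin.ext (by simp only [leafB]; omega)
          have hABne : (Sum.inr (leafA t ht i) : Fin t ⊕ Fin (2*t)) ≠ Sum.inr (leafB t ht i) := by
            simp only [ne_eq, Sum.inr.injEq]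
            intro hh
            have := congrArg Fin.val hh
            simp only [leafA, leafB] at this
            omega
          rcases hkAB with rfl | rfl
          · -- leafA = 2, show leafB = 1
            right; left
            refine ⟨h, hu2, ?_⟩
            have hB2 : f (Sum.inr (leafB t ht i)) ≠ 2 := by
              intro hh
              exact hABne (huniq _ ⟨hadjB, hh⟩).symm
            rcases fin3_cases (f (Sum.inr (leafB t ht i))) with hh | hh | hh
            · exact absurd hh (hleaf_ne0 _)
            · exact hh
            · exact absurd hh hB2
          · right; right
            refine ⟨h, ?_, hu2⟩
            have hA2 : f (Sum.inr (leafA t ht i)) ≠ 2 := by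
              intro hh
              exact hABne (huniq _ ⟨hadjA, hh⟩)
            rcases fin3_cases (f (Sum.inr (leafA t ht i))) with hh | hh | hh
            · exact absurd hh (hleaf_ne0 _)
            · exact hh
            · exact absurd hh hA2
      · -- f c_i = 1 : both leaves are 1
        left
        refine ⟨h, ?_, ?_⟩
        · have hA2 : f (Sum.inr (leafA t ht i)) ≠ 2 :=
            hf.2 _ _ (by rw [h]) hadjA
          rcases fin3_cases (f (Sum.inr (leafA t ht i))) with hh | hh | hh
          · exact absurd hh (hleaf_ne0 _)
          · exact hh
          · exact absurd hh hA2
        · have hB2 : f (Sum.inr (leafB t ht i)) ≠ 2 :=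
            hf.2 _ _ (by rw [h]) hadjB
          rcases fin3_cases (f (Sum.inr (leafB t ht i))) with hh | hh | hh
          · exact absurd hh (hleaf_ne0 _)
          · exact hh
          · exact absurd hh hB2
      · exact absurd h (h2 i)
    refine ⟨fun i => if f (Sum.inl i) = 1 then 0
      else if f (Sum.inr (leafA t ht i)) = 2 then 1 else 2, ?_⟩
    funext x
    match x with
    | .inl j =>
      rcases hmain j with ⟨h1, hA, hB⟩ | ⟨h1, hA, hB⟩ | ⟨h1, hA, hB⟩
      · rw [F2, if_pos (by rw [if_pos h1]), h1]
      · rw [F2, if_neg (by rw [if_neg (by rw [h1]; decide), if_pos hA]; decide), h1]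
      · rw [F2, if_neg (by rw [if_neg (by rw [h1]; decide), if_neg (by rw [hA]; decide)]; decide), h1]
    | .inr k =>
      set i : Fin t := ⟨(k : ℕ) / 2, half_lt k⟩ with hidef
      have hkAB : k = leafA t ht i ∨ k = leafB t ht i := by
        rcases Nat.mod_two_eq_zero_or_one (k : ℕ) with hm | hm
        · left; exact Fin.ext (by simp only [leafA, hidef]; omega)
        · right; exact Fin.ext (by simp only [leafB, hidef]; omega)
      have hAmod : ((leafA t ht i : Fin (2*t)) : ℕ) % 2 = 0 := by simp only [leafA]; omega
      have hBmod : ((leafB t ht i : Fin (2*t)) : ℕ) % 2 = 1 := by simp only [leafB]; omega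
      have hAidx : (⟨((leafA t ht i : Fin (2*t)) : ℕ) / 2, half_lt _⟩ : Fin t) = i :=
        Fin.ext (by simp only [leafA]; omega)
      have hBidx : (⟨((leafB t ht i : Fin (2*t)) : ℕ) / 2, half_lt _⟩ : Fin t) = i :=
        Fin.ext (by simp only [leafB]; omega)
      rcases hmain i with ⟨h1, hA, hB⟩ | ⟨h1, hA, hB⟩ | ⟨h1, hA, hB⟩
      · rcases hkAB with hk | hk <;> rw [hk]
        · rw [F2_inr, hAidx, if_pos (by rw [if_pos h1]), hA]
        · rw [F2_inr, hBidx, if_pos (by rw [if_pos h1]), hB]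
      · rcases hkAB with hk | hk <;> rw [hk]
        · rw [F2_inr, hAidx, if_neg (by rw [if_neg (by rw [h1]; decide), if_pos hA]; decide),
            if_pos (by rw [if_neg (by rw [h1]; decide), if_pos hA]), if_pos hAmod, hA]
        · rw [F2_inr, hBidx, if_neg (by rw [if_neg (by rw [h1]; decide), if_pos hA]; decide),
            if_pos (by rw [if_neg (by rw [h1]; decide), if_pos hA]), if_neg (by omega), hB]
      · rcases hkAB with hk | hk <;> rw [hk]
        · rw [F2_inr, hAidx,
            if_neg (by rw [if_neg (by rw [h1]; decide), if_neg (by rw [hA]; decide)]; decide),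
            if_neg (by rw [if_neg (by rw [h1]; decide), if_neg (by rw [hA]; decide)]; decide),
            if_pos hAmod, hA]
        · rw [F2_inr, hBidx,
            if_neg (by rw [if_neg (by rw [h1]; decide), if_neg (by rw [hA]; decide)]; decide),
            if_neg (by rw [if_neg (by rw [h1]; decide), if_neg (by rw [hA]; decide)]; decide),
            if_neg (by omega), hB]

lemma F1_inj : Function.Injective (F1 t) := by
  intro i j h
  by_contra hij
  have h1 := congrFun h (Sum.inl i)
  rw [F1, F1, if_pos rfl, if_neg hij] at h1
  exact absurd h1 (by decide)

lemma F2_inj : Function.Injective (F2 t) := by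
  intro g g' h
  funext i
  have ht : 1 ≤ t := by have := i.isLt; omega
  have h1 := congrFun h (Sum.inl i)
  rw [F2, F2] at h1
  have h2 := congrFun h (Sum.inr (leafA t ht i))
  rw [F2_inr, F2_inr] at h2
  have hAidx : (⟨((leafA t ht i : Fin (2*t)) : ℕ) / 2, half_lt _⟩ : Fin t) = i :=
    Fin.ext (by simp only [leafA]; omega)
  have hAmod : ((leafA t ht i : Fin (2*t)) : ℕ) % 2 = 0 := by simp only [leafA]; omega
  rw [hAidx] at h2
  rcases fin3_cases (g i) with hg | hg | hg <;>
    rcases fin3_cases (g' i) with hg' | hg' | hg' <;>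
      rw [hg, hg'] <;> rw [hg, hg'] at h1 h2 <;>
        simp_all <;> omega

lemma disj : Disjoint (Set.range (F1 t)) (Set.range (F2 t)) := by
  rw [Set.disjoint_left]
  rintro f ⟨i, rfl⟩ ⟨g, hg⟩
  have h := congrFun hg (Sum.inl i)
  rw [F1, F2, if_pos rfl] at h
  split at h <;> exact absurd h (by decide)

end SplitGtAux

theorem stmt6 (t : ℕ) (ht : 1 ≤ t) :
    -- G_t is connected
    (splitGt t).Connected ∧
    -- G_t has order 3t
    Fintype.card (Fin t ⊕ Fin (2 * t)) = 3 * t ∧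
    -- G_t is a split graph: C is a clique and I is an independent set
    (splitGt t).IsClique (Set.range (Sum.inl : Fin t → Fin t ⊕ Fin (2 * t))) ∧
    (∀ a b : Fin (2 * t), ¬ (splitGt t).Adj (Sum.inr a) (Sum.inr b)) ∧
    -- G_t has exactly t + 3^t unique response Roman dominating functions
    Set.ncard {f : Fin t ⊕ Fin (2 * t) → Fin 3 | IsURRDF (splitGt t) f} = t + 3 ^ t := by
  open SplitGtAux in
  refine ⟨?_, ?_, ?_, fun a b => adj_rr a b, ?_⟩
  · -- connectivity
    haveI : Nonempty (Fin t ⊕ Fin (2 * t)) := ⟨Sum.inl ⟨0, ht⟩⟩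
    have keyl : ∀ i : Fin t, (splitGt t).Reachable (Sum.inl ⟨0, ht⟩) (Sum.inl i) := by
      intro i
      by_cases h : (⟨0, ht⟩ : Fin t) = i
      · rw [h]
      · exact ((adj_ll _ i).2 h).reachable
    have key : ∀ v, (splitGt t).Reachable (Sum.inl ⟨0, ht⟩) v := by
      intro v
      match v with
      | .inl i => exact keyl i
      | .inr j =>
        exact (keyl ⟨(j : ℕ) / 2, half_lt j⟩).trans ((adj_lr _ j).2 rfl).reachable
    exact ⟨fun u v => (key u).symm.trans (key v)⟩
  · simp only [Fintype.card_sum, Fintype.card_fin]; omega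
  · rintro x ⟨i, rfl⟩ y ⟨j, rfl⟩ hxy
    exact (adj_ll i j).2 (by rintro rfl; exact hxy rfl)
  · have hset : {f : Fin t ⊕ Fin (2 * t) → Fin 3 | IsURRDF (splitGt t) f}
        = Set.range (F1 t) ∪ Set.range (F2 t) := by
      apply Set.ext
      intro f
      constructor
      · exact mem_ranges ht f
      · rintro (⟨i, rfl⟩ | ⟨g, rfl⟩)
        · exact F1_isURRDF i
        · exact F2_isURRDF g ht
    rw [hset, Set.ncard_union_eq disj (Set.toFinite _) (Set.toFinite _)]
    have h1 : (Set.range (F1 t)).ncard = t := by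
      rw [← Nat.card_coe_set_eq, Nat.card_range_of_injective F1_inj,
        Nat.card_eq_fintype_card, Fintype.card_fin]
    have h2 : (Set.range (F2 t)).ncard = 3 ^ t := by
      rw [← Nat.card_coe_set_eq, Nat.card_range_of_injective F2_inj,
        Nat.card_eq_fintype_card]
      simp
    rw [h1, h2]
end

section
/- Let G=(V,E) be a graph. A function f : V → {0,1,2} is a minimal perfect Roman dominating function if and only if the following three conditions hold: (1) for all v ∈ V_0(f), |N(v) ∩ V_2(f)| = 1; (2) for all v ∈ V_1(f), |N(v) ∩ V_2(f)| ≠ 1; (3) for all v ∈ V_2(f), |N(v) ∩ V_0(f)| ≠ 0. -/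
open Function

namespace SimpleGraph

variable {V : Type*} (G : SimpleGraph V) [Fintype V] [DecidableRel G.Adj]
  {p : V → Prop} [DecidablePred p] (v : V)

theorem card_neighborFinset_filter_eq_one_iff :
    ((G.neighborFinset v).filter p).card = 1 ↔ ∃! u, G.Adj v u ∧ p u := by
  simp only [Finset.card_eq_one, Finset.eq_singleton_iff_unique_mem, Finset.mem_filter,
    mem_neighborFinset, ExistsUnique]

theorem card_neighborFinset_filter_ne_zero_iff :
    ((G.neighborFinset v).filter p).card ≠ 0 ↔ ∃ u, G.Adj v u ∧ p u := by
  simp only [Finset.card_ne_zero, Finset.filter_nonempty_iff, mem_neighborFinset]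

end SimpleGraph

namespace IsPRDF

variable {V : Type*} {G : SimpleGraph V} {f g : V → Fin 3} {v : V}

theorem update_zero [DecidableEq V] (hf : IsPRDF G f) (hv₂ : f v ≠ 2)
    (hv : ∃! u, G.Adj v u ∧ f u = 2) : IsPRDF G (update f v 0) := by
  have h₂ : ∀ u, update f v 0 u = 2 ↔ f u = 2 := by
    intro u
    rcases eq_or_ne u v with rfl | hu
    · simp [hv₂]
    · rw [update_of_ne hu]
  intro w hw
  simp only [h₂]
  rcases eq_or_ne w v with rfl | hw'
  · exact hv
  · exact hf w (by rwa [update_of_ne hw'] at hw)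

theorem update_one [DecidableEq V] (hf : IsPRDF G f) (hv : ∀ u, G.Adj v u → f u ≠ 0) :
    IsPRDF G (update f v 1) := by
  intro w hw
  have hwv : w ≠ v := by
    rintro rfl
    simp at hw
  have hfw : f w = 0 := by rwa [update_of_ne hwv] at hw
  refine (existsUnique_congr fun u => and_congr_right fun hwu => ?_).2 (hf w hfw)
  have huv : u ≠ v := by
    rintro rfl
    exact hv w hwu.symm hfw
  rw [update_of_ne huv]

theorem eq_two_iff_of_le (hf : IsPRDF G f) (hg : IsPRDF G g) (hgf : g ≤ f)
    (hf₂ : ∀ v, f v = 2 → ∃ u, G.Adj v u ∧ f u = 0) (v : V) : g v = 2 ↔ f v = 2 := by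
  refine ⟨fun hv => ?_, fun hv => ?_⟩
  · have := hgf v
    fin_omega
  · obtain ⟨w, hvw, hw⟩ := hf₂ v hv
    have hgw : g w = 0 := by
      have := hgf w
      fin_omega
    obtain ⟨u, ⟨hwu, hu⟩, -⟩ := hg w hgw
    have hfu : f u = 2 := by
      have := hgf u
      fin_omega
    obtain rfl : u = v := (hf w hw).unique ⟨hwu, hfu⟩ ⟨hvw.symm, hv⟩
    exact hu

end IsPRDF

theorem minimal_isPRDF_iff {V : Type*} (G : SimpleGraph V) (f : V → Fin 3) :
    Minimal (IsPRDF G) f ↔ IsPRDF G f ∧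
      (∀ v, f v = 1 → ¬ ∃! u, G.Adj v u ∧ f u = 2) ∧
      (∀ v, f v = 2 → ∃ u, G.Adj v u ∧ f u = 0) := by
  classical
  refine ⟨fun hmin => ⟨hmin.prop, fun v hv h₂ => ?_, fun v hv => ?_⟩, ?_⟩
  · refine hmin.not_prop_of_lt (update_lt_self_iff.2 ?_) (hmin.prop.update_zero ?_ h₂)
    all_goals simp [hv]
  · by_contra! h₀
    exact hmin.not_prop_of_lt (update_lt_self_iff.2 (by simp [hv])) (hmin.prop.update_one h₀)
  · rintro ⟨hf, hf₁, hf₂⟩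
    refine ⟨hf, fun g hg hgf v => ?_⟩
    have h₂ := hf.eq_two_iff_of_le hg hgf hf₂
    have hgv := hgf v
    obtain hv | hv | hv : f v = 0 ∨ f v = 1 ∨ f v = 2 := by fin_omega
    · exact hv ▸ Fin.zero_le _
    · have : g v ≠ 0 := fun hgv₀ =>
        hf₁ v hv ((existsUnique_congr fun u => by rw [h₂]).1 (hg v hgv₀))
      fin_omega
    · rw [hv, (h₂ v).2 hv]

theorem stmt7_general {V : Type*} [Fintype V] (G : SimpleGraph V)
    [DecidableRel G.Adj] (f : V → Fin 3) :
    -- f is a minimal pRdf (w.r.t. the pointwise order) iff the three conditions hold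
    Minimal (IsPRDF G) f ↔
      ((∀ v, f v = 0 → ((G.neighborFinset v).filter (fun u => f u = 2)).card = 1) ∧
       (∀ v, f v = 1 → ((G.neighborFinset v).filter (fun u => f u = 2)).card ≠ 1) ∧
       (∀ v, f v = 2 → ((G.neighborFinset v).filter (fun u => f u = 0)).card ≠ 0)) := by
  rw [minimal_isPRDF_iff]
  simp only [IsPRDF, G.card_neighborFinset_filter_eq_one_iff,
    G.card_neighborFinset_filter_ne_zero_iff, ne_eq]

theorem stmt7 {V : Type*} [Fintype V] [DecidableEq V] (G : SimpleGraph V)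
    [DecidableRel G.Adj] (f : V → Fin 3) :
    -- f is a minimal pRdf (w.r.t. the pointwise order) iff the three conditions hold
    Minimal (IsPRDF G) f ↔
      ((∀ v, f v = 0 → ((G.neighborFinset v).filter (fun u => f u = 2)).card = 1) ∧
       (∀ v, f v = 1 → ((G.neighborFinset v).filter (fun u => f u = 2)).card ≠ 1) ∧
       (∀ v, f v = 2 → ((G.neighborFinset v).filter (fun u => f u = 0)).card ≠ 0)) :=
  stmt7_general G f
end

section
/- Let G=(V,E) be a graph. The constant function assigning 1 to every vertex is a minimal perfect Roman dominating function on G, and every minimal perfect Roman dominating function f on G satisfies ω(f) ≤ |V|; that is, the constant-1 function is a maximum-weight minimal pRdf. -/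
/-- The weight of a function `f : V → {0,1,2}`. -/
def weight {V : Type*} [Fintype V] (f : V → Fin 3) : ℕ := ∑ v, (f v : ℕ)

lemma fin3_cases_s8 (x : Fin 3) : x = 0 ∨ x = 1 ∨ x = 2 := by
  fin_cases x <;> simp

lemma l12 : (1 : Fin 3) ≤ 2 := by decide
lemma ln21 : ¬ (2 : Fin 3) ≤ 1 := by decide
lemma ln10 : (1 : Fin 3) ≠ 0 := by decide
lemma ln12 : (1 : Fin 3) ≠ 2 := by decide

/-- Key lemma: in a minimal pRdf, each vertex of value 2 has a "private" zero
vertex whose only 2-neighbor is it. -/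
lemma key {V : Type*} [DecidableEq V] (G : SimpleGraph V) (f : V → Fin 3)
    (hf : Minimal (IsPRDF G) f) (v : V) (hv : f v = 2) :
    ∃ w, f w = 0 ∧ ∀ u, G.Adj w u → f u = 2 → u = v := by
  set g : V → Fin 3 := Function.update f v 1 with hg
  have hgv : g v = 1 := by simp [hg]
  have hgle : g ≤ f := by
    intro u
    by_cases h : u = v
    · subst h; rw [hgv, hv]; exact l12
    · simp [hg, Function.update_of_ne h]
  have hng : ¬ IsPRDF G g := by
    intro h
    have hle := hf.2 h hgle v
    rw [hv, hgv] at hle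
    exact ln21 hle
  unfold IsPRDF at hng
  push_neg at hng
  obtain ⟨w, hw0, Hw⟩ := hng
  have hwv : w ≠ v := by
    intro h; rw [h, hgv] at hw0; exact ln10 hw0
  have hfw : f w = 0 := by rwa [hg, Function.update_of_ne hwv] at hw0
  obtain ⟨u₀, ⟨hadj, hu2⟩, huniq⟩ := hf.1 w hfw
  have hu0v : u₀ = v := by
    by_contra hne
    apply Hw
    refine ⟨u₀, ⟨hadj, by rwa [hg, Function.update_of_ne hne]⟩, ?_⟩
    intro u' ⟨ha', h2'⟩
    have hu'v : u' ≠ v := by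
      intro h; rw [h, hgv] at h2'; exact ln12 h2'
    rw [hg, Function.update_of_ne hu'v] at h2'
    exact huniq u' ⟨ha', h2'⟩
  exact ⟨w, hfw, fun u ha h2 => hu0v ▸ huniq u ⟨ha, h2⟩⟩

theorem stmt8 {V : Type*} [Fintype V] [DecidableEq V] (G : SimpleGraph V) :
    -- the constant-1 function is a minimal pRdf
    Minimal (IsPRDF G) (fun _ : V => (1 : Fin 3)) ∧
    -- every minimal pRdf has weight at most |V|
    (∀ f : V → Fin 3, Minimal (IsPRDF G) f → weight f ≤ Fintype.card V) := by
  constructor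
  · constructor
    · intro v hv
      exact (ln10 hv).elim
    · intro g hg hle v
      rcases fin3_cases_s8 (g v) with h | h | h
      · obtain ⟨u, ⟨-, hu2⟩, -⟩ := hg v h
        have := hle u
        rw [hu2] at this
        exact (ln21 this).elim
      · rw [h]
      · rw [h]; exact l12
  · intro f hf
    classical
    set S0 : Finset V := Finset.univ.filter (fun v => f v = 0) with hS0
    set S2 : Finset V := Finset.univ.filter (fun v => f v = 2) with hS2
    -- the injection from S2 into S0
    have hcard : S2.card ≤ S0.card := by
      set φ : V → V := fun v => if h : f v = 2 then (key G f hf v h).choose else v with hφ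
      apply Finset.card_le_card_of_injOn φ
      · intro v hv
        simp only [hS2, Finset.coe_filter, Finset.mem_coe, Finset.mem_filter, Set.mem_setOf_eq] at hv
        obtain ⟨hw0, -⟩ := (key G f hf v hv.2).choose_spec
        simp only [hφ, dif_pos hv.2, hS0, Finset.mem_coe, Finset.mem_filter]
        exact ⟨Finset.mem_univ _, hw0⟩
      · intro v hv v' hv' heq
        rw [Finset.coe_filter, Set.mem_setOf_eq] at hv hv'
        obtain ⟨hw0, hp⟩ := (key G f hf v hv.2).choose_spec
        obtain ⟨hw0', hp'⟩ := (key G f hf v' hv'.2).choose_spec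
        simp only [hφ, dif_pos hv.2, dif_pos hv'.2] at heq
        set w := (key G f hf v hv.2).choose
        rw [← heq] at hp'
        obtain ⟨u, ⟨hadj, hu2⟩, -⟩ := hf.1 w hw0
        rw [← hp u hadj hu2, ← hp' u hadj hu2]
    have hsum : weight f + S0.card ≤ Fintype.card V + S2.card := by
      have h0 : S0.card = ∑ v : V, (if f v = 0 then 1 else 0) := by
        rw [hS0, Finset.card_filter]
      have h2 : S2.card = ∑ v : V, (if f v = 2 then 1 else 0) := by
        rw [hS2, Finset.card_filter]
      have hc : Fintype.card V = ∑ _v : V, 1 := by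
        rw [Finset.sum_const, smul_eq_mul, mul_one, Finset.card_univ]
      rw [weight, h0, h2, hc, ← Finset.sum_add_distrib, ← Finset.sum_add_distrib]
      apply Finset.sum_le_sum
      intro v _
      rcases fin3_cases_s8 (f v) with h | h | h <;> rw [h] <;> decide
    omega
end

section
/- Let G=(V,E) be a graph and f : V → {0,1,2} such that (i) for each u ∈ V_1(f), |N(u) ∩ V_2(f)| ≠ 1, and (ii) each v ∈ V_2(f) has a private neighbor in V_0(f) with respect to G and V_2(f), i.e., some u ∈ N(v) ∩ V_0(f) with N(u) ∩ V_2(f) = {v}. Then there exists a minimal perfect Roman dominating function g on G with f ≤ g and V_2(g) = V_2(f). -/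
theorem stmt9 {V : Type*} [Fintype V] [DecidableEq V] (G : SimpleGraph V)
    [DecidableRel G.Adj] (f : V → Fin 3)
    -- (i) each vertex of value 1 does not have exactly one neighbor of value 2
    (h1 : ∀ u, f u = 1 → ((G.neighborFinset u).filter (fun w => f w = 2)).card ≠ 1)
    -- (ii) each vertex of value 2 has a private neighbor in V_0(f):
    -- some neighbor u of value 0 with N(u) ∩ V_2(f) = {v}
    (h2 : ∀ v, f v = 2 → ∃ u, G.Adj v u ∧ f u = 0 ∧
      (G.neighborFinset u).filter (fun w => f w = 2) = {v}) :
    ∃ g : V → Fin 3, Minimal (IsPRDF G) g ∧ f ≤ g ∧ (∀ v, g v = 2 ↔ f v = 2) := by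
  classical
  -- characterization of card = 1
  have cardone : ∀ v, ((G.neighborFinset v).filter (fun w => f w = 2)).card = 1 ↔
      ∃! w, G.Adj v w ∧ f w = 2 := by
    intro v
    rw [Finset.card_eq_one]
    constructor
    · rintro ⟨a, ha⟩
      have hmem := Finset.mem_singleton_self a
      rw [← ha] at hmem
      simp only [Finset.mem_filter, SimpleGraph.mem_neighborFinset] at hmem
      refine ⟨a, hmem, fun u hu => ?_⟩
      have : u ∈ (G.neighborFinset v).filter (fun w => f w = 2) := by
        simp only [Finset.mem_filter, SimpleGraph.mem_neighborFinset]; exact hu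
      rw [ha] at this
      exact Finset.mem_singleton.mp this
    · rintro ⟨a, ha, hu⟩
      refine ⟨a, Finset.eq_singleton_iff_unique_mem.mpr ⟨?_, fun x hx => ?_⟩⟩
      · simp only [Finset.mem_filter, SimpleGraph.mem_neighborFinset]; exact ha
      · simp only [Finset.mem_filter, SimpleGraph.mem_neighborFinset] at hx
        exact hu x hx
  set g : V → Fin 3 := fun v => if f v = 2 then 2 else
    if f v = 0 ∧ ((G.neighborFinset v).filter (fun w => f w = 2)).card = 1 then 0 else 1
    with hgdef
  have hg2 : ∀ v, g v = 2 ↔ f v = 2 := by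
    intro v
    simp only [hgdef]
    split_ifs with h h' <;> simp_all
  have hle : f ≤ g := by
    intro v
    simp only [hgdef]
    split_ifs with h h'
    · exact le_of_eq h
    · exact le_of_eq h'.1
    · -- f v ≠ 2 and (¬ (f v = 0 ∧ ...)); f v ≤ 1
      have hv := (f v).isLt
      by_cases h0 : f v = 0
      · rw [h0]; exact Fin.zero_le _
      · have : f v = 1 := by omega
        rw [this]
  have hgP : IsPRDF G g := by
    intro v hv
    have hv' : f v = 0 ∧ ((G.neighborFinset v).filter (fun w => f w = 2)).card = 1 := by
      by_contra hc
      simp only [hgdef] at hv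
      split_ifs at hv <;> simp_all
    obtain ⟨a, ha, hu⟩ := (cardone v).mp hv'.2
    refine ⟨a, ⟨ha.1, (hg2 a).mpr ha.2⟩, fun u hu' => hu u ⟨hu'.1, (hg2 u).mp hu'.2⟩⟩
  refine ⟨g, ⟨hgP, ?_⟩, hle, hg2⟩
  intro h hh hhle v
  -- key: h agrees with f on 2's
  have key : ∀ w, f w = 2 → h w = 2 := by
    intro w hw
    obtain ⟨u, hadj, hu0, hfilt⟩ := h2 w hw
    have hgu : g u = 0 := by
      simp only [hgdef]
      rw [if_neg (by simp [hu0]), if_pos ⟨hu0, by rw [hfilt]; simp⟩]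
    have hhu : h u = 0 := Fin.le_zero_iff.mp (hgu ▸ hhle u)
    obtain ⟨x, ⟨hxadj, hx2⟩, _⟩ := hh u hhu
    have hgx : g x = 2 := le_antisymm (Fin.le_last _) (hx2 ▸ hhle x)
    have hfx : f x = 2 := (hg2 x).mp hgx
    have : x ∈ (G.neighborFinset u).filter (fun w => f w = 2) := by
      simp only [Finset.mem_filter, SimpleGraph.mem_neighborFinset]; exact ⟨hxadj, hfx⟩
    rw [hfilt, Finset.mem_singleton] at this
    rw [← this]; exact hx2
  have hh2 : ∀ w, h w = 2 ↔ f w = 2 := by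
    intro w
    constructor
    · intro hw
      exact (hg2 w).mp (le_antisymm (Fin.le_last _) (hw ▸ hhle w))
    · exact key w
  -- show g ≤ h
  by_cases h2v : f v = 2
  · rw [(hg2 v).mpr h2v, key v h2v]
  by_cases h0 : g v = 0
  · rw [h0]; exact Fin.zero_le _
  · -- g v = 1, show h v ≠ 0
    have hgv1 : g v = 1 := by
      simp only [hgdef] at h0 ⊢
      rw [if_neg h2v] at h0 ⊢
      split_ifs at h0 ⊢ <;> simp_all
    rw [hgv1]
    by_contra hcon
    push_neg at hcon
    have hhv0 : h v = 0 := by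
      have := (h v).isLt
      have : (h v).val < 1 := by
        rw [Fin.lt_iff_val_lt_val] at hcon; simpa using hcon
      omega
    obtain ⟨x, ⟨hxadj, hx2⟩, hux⟩ := hh v hhv0
    have hcard : ((G.neighborFinset v).filter (fun w => f w = 2)).card = 1 := by
      rw [cardone v]
      exact ⟨x, ⟨hxadj, (hh2 x).mp hx2⟩, fun u hu => hux u ⟨hu.1, (hh2 u).mpr hu.2⟩⟩
    by_cases h0' : f v = 0
    · simp only [hgdef] at hgv1
      rw [if_neg h2v, if_pos ⟨h0', hcard⟩] at hgv1
      exact absurd hgv1 (by decide)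
    · have : f v = 1 := by
        have := (f v).isLt
        omega
      exact h1 v this hcard
end

section
/- Let G=(V,E) be a graph and f : V → {0,1,2}. There exists a minimal perfect Roman dominating function g on G with f ≤ g and V_2(g) = V_2(f) if and only if every v ∈ V_2(f) has a private neighbor in V_0(f) with respect to G and V_2(f) (i.e., some u ∈ N(v) ∩ V_0(f) with N(u) ∩ V_2(f) = {v}) and |N(u) ∩ V_2(f)| ≠ 1 holds for every u ∈ V_1(f). -/
section Aux

variable {V : Type*} [Fintype V] [DecidableEq V] (G : SimpleGraph V) [DecidableRel G.Adj]

lemma memF (f : V → Fin 3) (u w : V) :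
    w ∈ (G.neighborFinset u).filter (fun w => f w = 2) ↔ G.Adj u w ∧ f w = 2 := by
  simp [SimpleGraph.mem_neighborFinset]

lemma cardOne (f : V → Fin 3) (u : V) :
    ((G.neighborFinset u).filter (fun w => f w = 2)).card = 1 ↔
      ∃! w, G.Adj u w ∧ f w = 2 := by
  rw [Finset.card_eq_one]
  constructor
  · rintro ⟨a, ha⟩
    refine ⟨a, (memF G f u a).mp (ha ▸ Finset.mem_singleton_self a), fun y hy => ?_⟩
    have : y ∈ ({a} : Finset V) := ha ▸ (memF G f u y).mpr hy
    simpa using this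
  · rintro ⟨w, hw, hu⟩
    exact ⟨w, Finset.eq_singleton_iff_unique_mem.mpr
      ⟨(memF G f u w).mpr hw, fun y hy => hu y ((memF G f u y).mp hy)⟩⟩

lemma singI (f : V → Fin 3) (u v : V) :
    (G.neighborFinset u).filter (fun w => f w = 2) = {v} ↔
      (G.Adj u v ∧ f v = 2) ∧ ∀ w, G.Adj u w → f w = 2 → w = v := by
  rw [Finset.eq_singleton_iff_unique_mem]
  constructor
  · rintro ⟨h1, h2⟩
    exact ⟨(memF G f u v).mp h1, fun w hw h2' => h2 w ((memF G f u w).mpr ⟨hw, h2'⟩)⟩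
  · rintro ⟨h1, h2⟩
    exact ⟨(memF G f u v).mpr h1,
      fun x hx => h2 x ((memF G f u x).mp hx).1 ((memF G f u x).mp hx).2⟩

end Aux

theorem stmt10 {V : Type*} [Fintype V] [DecidableEq V] (G : SimpleGraph V)
    [DecidableRel G.Adj] (f : V → Fin 3) :
    (∃ g : V → Fin 3, Minimal (IsPRDF G) g ∧ f ≤ g ∧ (∀ v, g v = 2 ↔ f v = 2)) ↔
      ((∀ v, f v = 2 → ∃ u, G.Adj v u ∧ f u = 0 ∧
        (G.neighborFinset u).filter (fun w => f w = 2) = {v}) ∧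
       (∀ u, f u = 1 → ((G.neighborFinset u).filter (fun w => f w = 2)).card ≠ 1)) := by
  constructor
  · rintro ⟨g, hmin, hle, h2⟩
    have hP := hmin.1
    have hlep : ∀ w, f w ≤ g w := fun w => hle w
    constructor
    · -- private neighbor condition
      intro v hv
      have hgv : g v = 2 := (h2 v).mpr hv
      by_contra hno
      push_neg at hno
      set g' : V → Fin 3 := fun w => if w = v then 1 else g w with hg'
      have hP' : IsPRDF G g' := by
        intro w hw0
        have hwv : w ≠ v := by
          intro h; rw [hg'] at hw0; simp [h] at hw0
        have hgw0 : g w = 0 := by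
          rw [hg'] at hw0; simpa [hwv] using hw0
        obtain ⟨x, ⟨hxadj, hx2⟩, hxu⟩ := hP w hgw0
        have hxv : x ≠ v := by
          intro hxv
          subst hxv
          have hfw : f w = 0 := by have := hlep w; omega
          refine hno w hxadj.symm hfw ?_
          rw [singI]
          refine ⟨⟨hxadj, hv⟩, fun y hy hy2 => ?_⟩
          exact hxu y ⟨hy, (h2 y).mpr hy2⟩
        refine ⟨x, ⟨hxadj, by simp [hg', hxv, hx2]⟩, ?_⟩
        rintro y ⟨hyadj, hy2⟩
        have hyv : y ≠ v := by
          intro h; rw [hg'] at hy2; simp [h] at hy2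
        have : g y = 2 := by rw [hg'] at hy2; simpa [hyv] using hy2
        exact hxu y ⟨hyadj, this⟩
      have hle' : g' ≤ g := by
        intro w
        show g' w ≤ g w
        rw [hg']
        by_cases h : w = v
        · simp only [if_pos h]
          rw [h]
          omega
        · simp [h]
      have h3 : g v ≤ g' v := hmin.2 hP' hle' v
      have h4 : g' v = 1 := by simp [hg']
      omega
    · -- value-1 condition
      intro u hu1
      have hgu : g u = 1 := by
        have h1 := hlep u
        by_cases h : g u = 2
        · have := (h2 u).mp h; omega
        · omega
      intro hcard
      rw [cardOne] at hcard
      obtain ⟨w, ⟨hwadj, hw2⟩, hwu⟩ := hcard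
      have hgw2 : g w = 2 := (h2 w).mpr hw2
      set g' : V → Fin 3 := fun x => if x = u then 0 else g x with hg'
      have hP' : IsPRDF G g' := by
        intro x hx0
        by_cases hxu : u = x
        · refine ⟨w, ⟨hxu ▸ hwadj, ?_⟩, ?_⟩
          · have hwu' : w ≠ u := by intro h; rw [h] at hgw2; omega
            simp [hg', hwu', hgw2]
          · rintro y ⟨hyadj, hy2⟩
            have hyu : y ≠ u := by intro h; rw [hg'] at hy2; simp [h] at hy2
            have hgy : g y = 2 := by rw [hg'] at hy2; simpa [hyu] using hy2
            exact hwu y ⟨hxu ▸ hyadj, (h2 y).mp hgy⟩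
        · have hgx0 : g x = 0 := by
            have hxu' : x ≠ u := fun h => hxu h.symm
            rw [hg'] at hx0
            simpa [hxu'] using hx0
          obtain ⟨z, ⟨hzadj, hz2⟩, hzu⟩ := hP x hgx0
          have hzu' : z ≠ u := by intro h; rw [h] at hz2; omega
          refine ⟨z, ⟨hzadj, by simp [hg', hzu', hz2]⟩, ?_⟩
          rintro y ⟨hyadj, hy2⟩
          have hyu : y ≠ u := by intro h; rw [hg'] at hy2; simp [h] at hy2
          have : g y = 2 := by rw [hg'] at hy2; simpa [hyu] using hy2
          exact hzu y ⟨hyadj, this⟩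
      have hle' : g' ≤ g := by
        intro x
        show g' x ≤ g x
        rw [hg']
        by_cases h : x = u
        · simp only [if_pos h]; omega
        · simp [h]
      have h3 : g u ≤ g' u := hmin.2 hP' hle' u
      have h4 : g' u = 0 := by simp [hg']
      omega
  · rintro ⟨ha, hb⟩
    classical
    set g : V → Fin 3 := fun v => if f v = 2 then 2 else
      (if f v = 0 ∧ ((G.neighborFinset v).filter (fun w => f w = 2)).card = 1
        then 0 else 1) with hgdef
    have hg2 : ∀ v, g v = 2 ↔ f v = 2 := by
      intro v
      simp only [hgdef]
      split_ifs with h1 h2 <;> simp_all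
    have hg0 : ∀ v, g v = 0 →
        f v = 0 ∧ ((G.neighborFinset v).filter (fun w => f w = 2)).card = 1 := by
      intro v hv
      simp only [hgdef] at hv
      split_ifs at hv with h1 h2
      · exact absurd hv (by decide)
      · exact h2
      · exact absurd hv (by decide)
    have hle : f ≤ g := by
      intro v
      show f v ≤ g v
      simp only [hgdef]
      split_ifs with h1 h2
      · omega
      · exact le_of_eq h2.1
      · omega
    have hP : IsPRDF G g := by
      intro v hv0
      obtain ⟨hfv0, hcard⟩ := hg0 v hv0
      rw [cardOne] at hcard
      obtain ⟨w, ⟨hwadj, hw2⟩, hwu⟩ := hcard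
      exact ⟨w, ⟨hwadj, (hg2 w).mpr hw2⟩,
        fun y ⟨hyadj, hy2⟩ => hwu y ⟨hyadj, (hg2 y).mp hy2⟩⟩
    refine ⟨g, ⟨hP, ?_⟩, hle, hg2⟩
    intro g' hP' hle'
    have hlep : ∀ w, g' w ≤ g w := fun w => hle' w
    have step1 : ∀ v, g v = 2 → g' v = 2 := by
      intro v hgv2
      have hfv2 : f v = 2 := (hg2 v).mp hgv2
      obtain ⟨u, huadj, hu0, hufil⟩ := ha v hfv2
      have hcard : ((G.neighborFinset u).filter (fun w => f w = 2)).card = 1 := by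
        rw [hufil]; simp
      have hgu0 : g u = 0 := by
        simp only [hgdef]
        have hfu : f u ≠ 2 := by omega
        rw [if_neg hfu, if_pos ⟨hu0, hcard⟩]
      have hg'u0 : g' u = 0 := by have := hlep u; omega
      obtain ⟨w, ⟨hwadj, hw2⟩, _⟩ := hP' u hg'u0
      have hgw2 : g w = 2 := by have := hlep w; omega
      have hfw2 : f w = 2 := (hg2 w).mp hgw2
      have hwv : w = v := ((singI G f u v).mp hufil).2 w hwadj hfw2
      rw [← hwv]; exact hw2
    intro v
    show g v ≤ g' v
    rcases (by omega : g v = 0 ∨ g v = 1 ∨ g v = 2) with h | h | h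
    · rw [h]; omega
    · rw [h]
      rcases (by omega : g' v = 0 ∨ (1:Fin 3) ≤ g' v) with h0 | h1
      · exfalso
        obtain ⟨w, ⟨hwadj, hw2⟩, hwu⟩ := hP' v h0
        have hcard : ((G.neighborFinset v).filter (fun w => f w = 2)).card = 1 := by
          rw [cardOne]
          refine ⟨w, ⟨hwadj, (hg2 w).mp (by have := hlep w; omega)⟩, ?_⟩
          rintro y ⟨hyadj, hy2⟩
          exact hwu y ⟨hyadj, step1 y ((hg2 y).mpr hy2)⟩
        have hfv : f v ≠ 2 := by
          intro h2'; have := (hg2 v).mpr h2'; omega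
        rcases (by omega : f v = 0 ∨ f v = 1) with h0' | h1'
        · simp only [hgdef] at h
          rw [if_neg hfv, if_pos ⟨h0', hcard⟩] at h
          exact absurd h (by decide)
        · exact hb v h1' hcard
      · exact h1
    · rw [h, step1 v h]
end

section
/- Let G=(V,E) be a graph and f : V → {0,1,2}. Then every minimal perfect Roman dominating function g on G with f ≤ g satisfies |V_2(g)| ≤ |V_0(f)|. -/
theorem stmt12 {V : Type*} [Fintype V] [DecidableEq V] (G : SimpleGraph V)
    (f : V → Fin 3) :
    ∀ g : V → Fin 3, Minimal (IsPRDF G) g → f ≤ g →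
      (Finset.univ.filter (fun v => g v = 2)).card ≤
        (Finset.univ.filter (fun v => f v = 0)).card := by
  intro g hg hfg
  -- every vertex with value 2 has a "private" neighbor with value 0
  have key : ∀ u, g u = 2 → ∃ v, g v = 0 ∧ G.Adj v u := by
    intro u hu
    by_contra hcon
    push_neg at hcon
    set g' : V → Fin 3 := Function.update g u 1 with hg'
    have hle : g' ≤ g := by
      intro v
      by_cases h : v = u
      · subst h; simp [hg', hu]
      · simp [hg', Function.update_of_ne h]
    have hP : IsPRDF G g' := by
      intro v hv
      have hvu : v ≠ u := by
        intro h; subst h; simp [hg'] at hv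
      have hv0 : g v = 0 := by simpa [hg', Function.update_of_ne hvu] using hv
      obtain ⟨w, ⟨hadj, hw2⟩, huniq⟩ := hg.prop v hv0
      have hwu : w ≠ u := by
        intro h; subst h; exact hcon v hv0 hadj
      refine ⟨w, ⟨hadj, by simp [hg', Function.update_of_ne hwu, hw2]⟩, ?_⟩
      rintro w' ⟨hadj', hw'2⟩
      have hw'u : w' ≠ u := by
        intro h; subst h; simp [hg'] at hw'2
      exact huniq w' ⟨hadj', by simpa [hg', Function.update_of_ne hw'u] using hw'2⟩
    have hgle : g ≤ g' := hg.2 hP hle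
    have h2 : g u ≤ g' u := hgle u
    simp [hg', hu] at h2
  have key' : ∀ u, ∃ v, g u = 2 → g v = 0 ∧ G.Adj v u := by
    intro u
    by_cases h : g u = 2
    · obtain ⟨v, hv⟩ := key u h; exact ⟨v, fun _ => hv⟩
    · exact ⟨u, fun h' => absurd h' h⟩
  choose φ hφ using key'
  apply Finset.card_le_card_of_injOn φ
  · intro u hu
    simp only [Finset.mem_coe, Finset.mem_filter, Finset.mem_univ, true_and] at hu ⊢
    obtain ⟨h0, _⟩ := hφ u hu
    have : f (φ u) ≤ g (φ u) := hfg _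
    rw [h0] at this
    exact le_antisymm this (Fin.zero_le _)
  · intro a ha b hb hab
    simp only [Finset.coe_filter, Set.mem_setOf_eq, Finset.mem_univ, true_and] at ha hb
    obtain ⟨ha0, haadj⟩ := hφ a ha
    obtain ⟨hb0, hbadj⟩ := hφ b hb
    obtain ⟨w, hw, huniq⟩ := hg.prop (φ a) ha0
    have h1 : a = w := huniq a ⟨haadj, ha⟩
    have h2 : b = w := huniq b ⟨hab ▸ hbadj, hb⟩
    exact h1.trans h2.symm
end
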